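/- arXiv:2105.14643 — 2 statements merged into one kernel-verified Lean document; each statement's English description precedes it below -/
import Mathlib

section
/- Under the hypotheses where the boundary of the compact convex body F is locally the zero set of a C² function f with ⟨η, ∇f(η)⟩ > 0, for η ∈ ∂F near ξ the set N_F(η) ∩ ∂F° is a singleton, namely {∇f(η)/⟨η, ∇f(η)⟩}. -/
open RealInnerProductSpace Filter Metric Topology

noncomputable section

abbrev Euc (n : ℕ) := EuclideanSpace ℝ (Fin n)

/-- The polar set `F°`. -/
def polarSet {n : ℕ} (F : Set (Euc n)) : Set (Euc n) := {y | ∀ x ∈ F, ⟪x, y⟫ ≤ 1}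

/-- The normal cone of convex analysis to `F` at `ξ`. -/
def normalCone {n : ℕ} (F : Set (Euc n)) (ξ : Euc n) : Set (Euc n) :=
  {ζ | ∀ y ∈ F, ⟪y - ξ, ζ⟫ ≤ 0}

/-- The tangent hyperplane to `F` at `ξ`. -/
def tangentHyp {n : ℕ} (F : Set (Euc n)) (ξ : Euc n) : Set (Euc n) :=
  {v | ∀ ζ ∈ normalCone F ξ, ⟪v, ζ⟫ = 0}

/-- The 2-dimensional plane `P(η, u) = span{∇f(η), u} + η`. -/
def planeP {n : ℕ} (f : Euc n → ℝ) (η u : Euc n) : Set (Euc n) :=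
  {y | ∃ a b : ℝ, y = η + a • gradient f η + b • u}

/-- `η* = ∇f(η)/⟨η, ∇f(η)⟩`, the unique element of `N_F(η) ∩ ∂F°`. -/
def etaStar {n : ℕ} (f : Euc n → ℝ) (η : Euc n) : Euc n :=
  (⟪η, gradient f η⟫)⁻¹ • gradient f η

/-- The 2-dimensional modulus of strict convexity `Ĉ_F(r, η, u)`. -/
def Chat {n : ℕ} (F : Set (Euc n)) (f : Euc n → ℝ) (r : ℝ) (η u : Euc n) : ℝ :=
  sInf {t | ∃ y, y ∈ F ∧ y ∈ planeP f η u ∧ r ≤ ‖η - y‖ ∧ t = ⟪η - y, etaStar f η⟫}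

/-- The tangent vector at `η` corresponding to a tangent vector `u` at `ξ`: the
coordinates `j ≠ i` agree with those of `u` and the `i`-th coordinate is determined
by tangency at `η`.  For `u = e_j` this is the tangent basis vector `u^j(η)`. -/
def uAt {n : ℕ} (f : Euc n → ℝ) (i : Fin n) (u : Euc n) (η : Euc n) : Euc n :=
  ∑ j ∈ Finset.univ.erase i,
    u j • (EuclideanSpace.single j (1:ℝ) -
      (gradient f η j / gradient f η i) • EuclideanSpace.single i (1:ℝ))

/-- The directional lower curvature `γ̂_F(ξ, u(ξ))`, a liminf of the directional modulus
of strict convexity over `r²` as `(r, η) → (0⁺, ξ)`, `η ∈ ∂F`. -/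
def gammaDir {n : ℕ} (F : Set (Euc n)) (f : Euc n → ℝ) (i : Fin n) (ξ u : Euc n) : ℝ :=
  Filter.liminf (fun p : ℝ × Euc n => Chat F f p.1 p.2 (uAt f i u p.2) / p.1 ^ 2)
    ((𝓝[>] (0:ℝ)) ×ˢ (𝓝 ξ ⊓ 𝓟 (frontier F)))

/-- The Hessian bilinear form `⟨∇²f(ξ)u, v⟩`. -/
def hessQ {n : ℕ} (f : Euc n → ℝ) (ξ u v : Euc n) : ℝ := ⟪fderiv ℝ (gradient f) ξ u, v⟫

/-!
The first-order condition for the maximum of `f` on the convex set `F` at `η` puts `∇f(η)` in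
`N_F(η)`. Conversely, near `η` the level set `{f = 0}` lies in `∂F ⊆ F`, so every `ζ ∈ N_F(η)`
makes `⟨·, ζ⟩` locally maximal on that level set at `η`, and the Lagrange multiplier rule
forces `ζ ∈ ℝ ∇f(η)`. Finally, for `ζ ∈ N_F(η)` and bounded `F`, `ζ ∈ ∂F°` exactly when
`⟨η, ζ⟩ = 1`, which selects the multiple `∇f(η)/⟨η, ∇f(η)⟩`.
-/

section PolarSet

variable {n : ℕ} {F : Set (Euc n)} {η ζ : Euc n}

lemma mem_normalCone_iff_forall_inner_le :
    ζ ∈ normalCone F η ↔ ∀ y ∈ F, ⟪y, ζ⟫ ≤ ⟪η, ζ⟫ := by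
  simp only [normalCone, Set.mem_ofPred_eq, inner_sub_left, sub_nonpos]

lemma smul_mem_normalCone {c : ℝ} (hc : 0 ≤ c) (hζ : ζ ∈ normalCone F η) :
    c • ζ ∈ normalCone F η := fun y hy => by
  rw [real_inner_smul_right]
  exact mul_nonpos_of_nonneg_of_nonpos hc (hζ y hy)

lemma isClosed_polarSet (F : Set (Euc n)) : IsClosed (polarSet F) := by
  simp only [polarSet, Set.ofPred_forall]
  exact isClosed_biInter fun x _ => isClosed_le (continuous_const.inner continuous_id)
    continuous_const

lemma mem_frontier_polarSet_of_inner_eq_one {x y : Euc n} (hx : x ∈ F) (hy : y ∈ polarSet F)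
    (hxy : ⟪x, y⟫ = 1) : y ∈ frontier (polarSet F) := by
  refine ⟨subset_closure hy, fun hint => ?_⟩
  -- `t • y` leaves `F°` for every `t > 1`, since `⟪x, t • y⟫ = t`.
  have hlim : Tendsto (fun t : ℝ => t • y) (𝓝[>] 1) (𝓝 y) := by
    simpa using ((tendsto_id (x := 𝓝 (1 : ℝ))).smul_const y).mono_left nhdsWithin_le_nhds
  obtain ⟨t, ht, hty⟩ :=
    ((hlim.eventually (isOpen_interior.mem_nhds hint)).and self_mem_nhdsWithin).exists
  have := interior_subset ht x hx
  rw [real_inner_smul_right, hxy, mul_one] at this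
  exact absurd hty (not_lt.2 this)

lemma inner_eq_one_of_mem_frontier_polarSet (hF : Bornology.IsBounded F) (hη : η ∈ F)
    (hζ : ζ ∈ normalCone F η) (hfr : ζ ∈ frontier (polarSet F)) : ⟪η, ζ⟫ = 1 := by
  refine le_antisymm ((isClosed_polarSet F).frontier_subset hfr η hη) (not_lt.1 fun hlt => ?_)
  obtain ⟨R, hRpos, hR⟩ := hF.exists_pos_norm_le
  have hball : ball ζ ((1 - ⟪η, ζ⟫) / R) ⊆ polarSet F := by
    intro y hy x hx
    have hyζ : R * ‖y - ζ‖ < 1 - ⟪η, ζ⟫ := by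
      rw [← lt_div_iff₀' hRpos, ← dist_eq_norm]; exact hy
    calc ⟪x, y⟫ = ⟪x, ζ⟫ + ⟪x, y - ζ⟫ := by rw [← inner_add_right, add_sub_cancel]
      _ ≤ ⟪η, ζ⟫ + R * ‖y - ζ‖ := by
          gcongr
          · exact mem_normalCone_iff_forall_inner_le.1 hζ x hx
          · exact (real_inner_le_norm _ _).trans
              (mul_le_mul_of_nonneg_right (hR x hx) (norm_nonneg _))
      _ ≤ 1 := by linarith
  have hint : ζ ∈ interior (polarSet F) :=
    mem_interior.2 ⟨_, hball, isOpen_ball, mem_ball_self (div_pos (by linarith) hRpos)⟩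
  exact hfr.2 hint

lemma normalCone_inter_frontier_polarSet_eq_singleton (hF : Bornology.IsBounded F)
    (hη : η ∈ F) {g : Euc n} (hg : g ∈ normalCone F η) (hpos : 0 < ⟪η, g⟫)
    (hline : ∀ ζ ∈ normalCone F η, ∃ c : ℝ, ζ = c • g) :
    normalCone F η ∩ frontier (polarSet F) = {⟪η, g⟫⁻¹ • g} := by
  have hone : ⟪η, ⟪η, g⟫⁻¹ • g⟫ = 1 := by
    rw [real_inner_smul_right, inv_mul_cancel₀ hpos.ne']
  have hnormal : ⟪η, g⟫⁻¹ • g ∈ normalCone F η := smul_mem_normalCone (by positivity) hg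
  ext ζ
  constructor
  · rintro ⟨hζ, hfr⟩
    obtain ⟨c, rfl⟩ := hline ζ hζ
    have hc : c * ⟪η, g⟫ = 1 := by
      rw [← real_inner_smul_right]; exact inner_eq_one_of_mem_frontier_polarSet hF hη hζ hfr
    rw [Set.mem_singleton_iff, eq_inv_of_mul_eq_one_left hc]
  · rintro rfl
    refine ⟨hnormal, mem_frontier_polarSet_of_inner_eq_one hη (fun x hx => ?_) hone⟩
    rw [← hone]
    exact mem_normalCone_iff_forall_inner_le.1 hnormal x hx

end PolarSet

lemma gradient_mem_normalCone {n : ℕ} {F : Set (Euc n)} {f : Euc n → ℝ} {η : Euc n}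
    (hFc : Convex ℝ F) (hη : η ∈ F) (hmax : ∀ y ∈ F, f y ≤ f η)
    (hf : DifferentiableAt ℝ f η) : gradient f η ∈ normalCone F η := by
  intro y hy
  have hcone : y - η ∈ posTangentConeAt F η :=
    sub_mem_posTangentConeAt_of_segment_subset (hFc.segment_subset hη hy)
  rw [real_inner_comm, gradient, InnerProductSpace.toDual_symm_apply]
  exact IsLocalMaxOn.hasFDerivWithinAt_nonpos (IsMaxOn.localize hmax)
    hf.hasFDerivAt.hasFDerivWithinAt hcone

lemma exists_eq_smul_gradient_of_isLocalMaxOn_inner {E : Type*} [NormedAddCommGroup E]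
    [InnerProductSpace ℝ E] [CompleteSpace E] {f : E → ℝ} {x₀ ζ : E}
    (hf : HasStrictFDerivAt f (fderiv ℝ f x₀) x₀) (hg : gradient f x₀ ≠ 0)
    (hmax : IsLocalMaxOn (fun x => ⟪ζ, x⟫) {x | f x = f x₀} x₀) :
    ∃ c : ℝ, ζ = c • gradient f x₀ := by
  obtain ⟨a, b, hab, hsum⟩ :=
    IsLocalExtrOn.exists_multipliers_of_hasStrictFDerivAt_1d (Or.inr hmax) hf
      (innerSL ℝ ζ).hasStrictFDerivAt
  have hcomb : ∀ w, a * ⟪gradient f x₀, w⟫ + b * ⟪ζ, w⟫ = 0 := fun w => by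
    simpa [gradient, InnerProductSpace.toDual_symm_apply] using congrArg (· w) hsum
  have hb : b ≠ 0 := by
    rintro rfl
    have ha : a = 0 := by simpa [hg] using hcomb (gradient f x₀)
    exact hab (by simp [ha])
  refine ⟨-a / b, ext_inner_right ℝ fun w => ?_⟩
  rw [real_inner_smul_left]
  field_simp
  linarith [hcomb w]

lemma exists_eq_smul_gradient_of_mem_normalCone {n : ℕ} {F U : Set (Euc n)} {f : Euc n → ℝ}
    {η ζ : Euc n} (hU : U ∈ 𝓝 η) (hUF : ∀ x ∈ U, f x = f η → x ∈ F)
    (hf : HasStrictFDerivAt f (fderiv ℝ f η) η) (hg : gradient f η ≠ 0)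
    (hζ : ζ ∈ normalCone F η) : ∃ c : ℝ, ζ = c • gradient f η := by
  refine exists_eq_smul_gradient_of_isLocalMaxOn_inner hf hg ?_
  filter_upwards [nhdsWithin_le_nhds hU, self_mem_nhdsWithin] with x hxU hfx
  simpa only [real_inner_comm ζ] using
    mem_normalCone_iff_forall_inner_le.1 hζ x (hUF x hxU hfx)

theorem normalCone_inter_frontier_polar_singleton_general
    {n : ℕ} (F : Set (Euc n)) (hF : IsCompact F) (hFc : Convex ℝ F) (ξ : Euc n)
    (f : Euc n → ℝ) (δ : ℝ) (hf : ContDiffOn ℝ 2 f (Metric.ball ξ δ))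
    (hFf : F ⊆ {x | f x ≤ 0})
    (hbd : ∀ x ∈ Metric.ball ξ δ, (x ∈ frontier F ↔ f x = 0))
    (δ' : ℝ) (hδ'le : δ' ≤ δ)
    (hδ' : ∀ y ∈ Metric.ball ξ δ', 0 < ⟪y, gradient f y⟫) :
    ∀ η ∈ frontier F ∩ Metric.ball ξ δ',
      normalCone F η ∩ frontier (polarSet F) = {etaStar f η} := by
  rintro η ⟨hηfr, hηball⟩
  have hηδ : η ∈ ball ξ δ := ball_subset_ball hδ'le hηball
  have hηF : η ∈ F := hF.isClosed.frontier_subset hηfr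
  have hfη : f η = 0 := (hbd η hηδ).1 hηfr
  have hcd : ContDiffAt ℝ 2 f η := hf.contDiffAt (isOpen_ball.mem_nhds hηδ)
  have hpos : 0 < ⟪η, gradient f η⟫ := hδ' η hηball
  have hg : gradient f η ≠ 0 := fun h => by simp [h] at hpos
  refine normalCone_inter_frontier_polarSet_eq_singleton hF.isBounded hηF ?_ hpos ?_
  · exact gradient_mem_normalCone hFc hηF (fun y hy => hfη ▸ hFf hy)
      (hcd.differentiableAt (by norm_num))
  · intro ζ hζ
    refine exists_eq_smul_gradient_of_mem_normalCone (isOpen_ball.mem_nhds hηδ) ?_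
      (hcd.hasStrictFDerivAt (by norm_num)) hg hζ
    exact fun x hx hfx => hF.isClosed.frontier_subset ((hbd x hx).2 (hfx.trans hfη))

/-- Under the standing C² hypotheses, for boundary points `η` near `ξ` the set
`N_F(η) ∩ ∂F°` is the singleton `{∇f(η)/⟨η, ∇f(η)⟩}`. -/
theorem normalCone_inter_frontier_polar_singleton
    {n : ℕ} (hn : 2 ≤ n) (F : Set (Euc n)) (hF : IsCompact F) (hFc : Convex ℝ F)
    (h0 : (0 : Euc n) ∈ interior F) (ξ : Euc n) (hξ : ξ ∈ frontier F)
    (f : Euc n → ℝ) (δ : ℝ) (hδ : 0 < δ) (hf : ContDiffOn ℝ 2 f (Metric.ball ξ δ))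
    (hFf : F ⊆ {x | f x ≤ 0}) (hgr : 0 < ⟪ξ, gradient f ξ⟫)
    (hbd : ∀ x ∈ Metric.ball ξ δ, (x ∈ frontier F ↔ f x = 0))
    (δ' : ℝ) (hδ'pos : 0 < δ') (hδ'le : δ' ≤ δ)
    (hδ' : ∀ y ∈ Metric.ball ξ δ', 0 < ⟪y, gradient f y⟫) :
    ∀ η ∈ frontier F ∩ Metric.ball ξ δ',
      normalCone F η ∩ frontier (polarSet F) = {etaStar f η} :=
  normalCone_inter_frontier_polar_singleton_general F hF hFc ξ f δ hf hFf hbd δ' hδ'le hδ'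
end
end

section
/- Under the hypotheses of the main theorem, Goldman's curvature of the intersection curve ∂F ∩ P(ξ, u^j(ξ)) equals twice the directional curvature: k_G(ξ) = 2 κ̂_F(ξ, u^j(ξ)). -/
/-!
Write `u = e_j - (f_{x_j}/f_{x_i}) e_i` for the tangent vector `u^j(ξ)`. Expanding,
`f_{x_i}² ⟨∇²f(ξ)u, u⟩` is the expression inside the absolute value in `k_G(ξ)` and
`f_{x_i}² ‖u‖² = f_{x_i}² + f_{x_j}²`, so the identity amounts to `⟨∇²f(ξ)u, u⟩ ≥ 0`.
This is the second-order necessary condition for `f` to be `≥ 0` near `ξ` on the tangent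
hyperplane `⟨∇f(ξ), a - ξ⟩ = 0`. And it is: if `f a < 0` there, moving from `a` in the
direction `∇f(ξ)` one reaches a zero of `f`, i.e. a point of `∂F ⊆ F`, strictly beyond the
supporting hyperplane of the convex set `F` at `ξ`.
-/

open RealInnerProductSpace Filter Metric Topology

noncomputable section

open Set

theorem HasDerivAt.eventually_nhdsGT_lt {g : ℝ → ℝ} {g' a : ℝ} (hg : HasDerivAt g g' a)
    (hpos : 0 < g') : ∀ᶠ t in 𝓝[>] a, g a < g t := by
  have hslope := (hasDerivAt_iff_tendsto_slope.1 hg).mono_left (nhdsGT_le_nhdsNE a)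
  filter_upwards [hslope.eventually (eventually_gt_nhds hpos), self_mem_nhdsWithin]
    with t hgt (hat : a < t)
  exact (slope_pos_iff hat).1 hgt

theorem nonneg_of_hasDerivAt_of_eventually_nhdsGT_le {φ φ' : ℝ → ℝ} {a Q : ℝ}
    (hφ : ∀ᶠ t in 𝓝 a, HasDerivAt φ (φ' t) t) (hφ'a : φ' a = 0) (hφ' : HasDerivAt φ' Q a)
    (hmin : ∀ᶠ t in 𝓝[>] a, φ a ≤ φ t) : 0 ≤ Q := by
  by_contra! hQ
  have hneg : ∀ᶠ t in 𝓝[>] a, φ' t < 0 := by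
    simpa [hφ'a] using hφ'.neg.eventually_nhdsGT_lt (neg_pos.2 hQ)
  obtain ⟨ε, hε, hderiv⟩ := Metric.eventually_nhds_iff_ball.1 hφ
  obtain ⟨b, hab, hneg⟩ := mem_nhdsGT_iff_exists_Ioo_subset.1 hneg
  obtain ⟨t, ⟨hat, htb⟩, hle⟩ := (Filter.Eventually.and
    (Ioo_mem_nhdsGT (lt_min hab (lt_add_of_pos_right a hε))) hmin).exists
  have hball : Icc a t ⊆ ball a ε := fun s hs => by
    rw [Real.ball_eq_Ioo]
    exact ⟨by linarith [hs.1], by linarith [hs.2, min_le_right b (a + ε)]⟩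
  obtain ⟨c, hc, hφc⟩ := exists_hasDerivAt_eq_slope φ φ' hat
    (fun s hs => (hderiv s (hball hs)).continuousAt.continuousWithinAt)
    (fun s hs => hderiv s (hball (Ioo_subset_Icc_self hs)))
  have hφc_neg : φ' c < 0 := hneg ⟨hc.1, hc.2.trans (htb.trans_le (min_le_left _ _))⟩
  rw [hφc] at hφc_neg
  linarith [neg_of_div_neg_left hφc_neg (sub_nonneg.2 hat.le)]

section NormedSpace

variable {E : Type*} [NormedAddCommGroup E] [NormedSpace ℝ E]

theorem IsMaxOn.fderiv_apply_sub_nonpos {f : E → ℝ} {s : Set E} {ξ y : E} (hmax : IsMaxOn f s ξ)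
    (hs : Convex ℝ s) (hξ : ξ ∈ s) (hy : y ∈ s) (hf : DifferentiableAt ℝ f ξ) :
    fderiv ℝ f ξ (y - ξ) ≤ 0 :=
  hmax.localize.hasFDerivWithinAt_nonpos hf.hasFDerivAt.hasFDerivWithinAt
    (sub_mem_posTangentConeAt_of_segment_subset (hs.segment_subset hξ hy))

theorem HasFDerivAt.hasDerivAt_comp_add_smul {F : Type*} [NormedAddCommGroup F] [NormedSpace ℝ F]
    {f : E → F} {f' : E →L[ℝ] F} {a v : E} {t : ℝ}
    (hf : HasFDerivAt f f' (a + t • v)) : HasDerivAt (fun s : ℝ => f (a + s • v)) (f' v) t :=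
  hf.comp_hasDerivAt t
    (((hasDerivAt_id t).smul_const v).const_add a |>.congr_deriv (one_smul ℝ v))

theorem eventually_nonneg_of_map_sub_eq_zero {f : E → ℝ} {ℓ : E →L[ℝ] ℝ} {ξ d : E} {U : Set E}
    (hU : U ∈ 𝓝 ξ) (hcont : ContinuousOn f U) (hf : HasFDerivAt f ℓ ξ) (hfξ : f ξ = 0)
    (hd : 0 < ℓ d) (hzero : ∀ y ∈ U, f y = 0 → ℓ (y - ξ) ≤ 0) :
    ∀ᶠ a in 𝓝 ξ, ℓ (a - ξ) = 0 → 0 ≤ f a := by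
  obtain ⟨r, hr, hrU⟩ := Metric.mem_nhds_iff.1 hU
  have hline : HasDerivAt (fun s : ℝ => f (ξ + s • d)) (ℓ d) 0 :=
    (by simpa using hf : HasFDerivAt f ℓ (ξ + (0 : ℝ) • d)).hasDerivAt_comp_add_smul
  have hnear : ∀ᶠ s in 𝓝[>] (0 : ℝ), ξ + s • d ∈ ball ξ r := by
    have : Tendsto (fun s : ℝ => ξ + s • d) (𝓝 0) (𝓝 ξ) :=
      (by fun_prop : Continuous fun s : ℝ => ξ + s • d).tendsto' 0 ξ (by simp)
    exact nhdsWithin_le_nhds (this.eventually (ball_mem_nhds ξ hr))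
  obtain ⟨s, (hs : 0 < s), hfpos, hsr⟩ := (eventually_mem_nhdsWithin.and
    ((hline.eventually_nhdsGT_lt hd).and hnear)).exists
  simp only [zero_smul, add_zero, hfξ] at hfpos
  have hshift : Tendsto (fun a => a + s • d) (𝓝 ξ) (𝓝 (ξ + s • d)) :=
    tendsto_id.add_const _
  have hfcont : ContinuousAt f (ξ + s • d) :=
    hcont.continuousAt (mem_of_superset (isOpen_ball.mem_nhds hsr) hrU)
  filter_upwards [ball_mem_nhds ξ hr,
    hshift.eventually ((isOpen_ball.eventually_mem hsr).and
      (hfcont.eventually (eventually_gt_nhds hfpos)))] with a ha ⟨hab, hfab⟩ htan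
  by_contra! hfa
  have hseg : segment ℝ a (a + s • d) ⊆ U := ((convex_ball ξ r).segment_subset ha hab).trans hrU
  obtain ⟨y, hy, hfy⟩ := (convex_segment a (a + s • d)).isPreconnected.intermediate_value
    (left_mem_segment ℝ _ _) (right_mem_segment ℝ _ _) (hcont.mono hseg) ⟨hfa.le, hfab.le⟩
  have hℓy := hzero y (hseg hy) hfy
  rw [segment_eq_image'] at hy
  obtain ⟨θ, hθ, rfl⟩ := hy
  have : a + θ • (a + s • d - a) - ξ = (a - ξ) + (θ * s) • d := by module
  rw [this, map_add, map_smul, htan, smul_eq_mul, zero_add] at hℓy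
  have hθ0 : θ = 0 := by nlinarith [hθ.1, mul_pos hs hd]
  exact hfa.ne (by simpa [hθ0] using hfy)

theorem fderiv_fderiv_apply_self_nonneg {f : E → ℝ} {ξ u : E} (hf : ContDiffAt ℝ 2 f ξ)
    (hu : fderiv ℝ f ξ u = 0)
    (hmin : ∀ᶠ a in 𝓝 ξ, fderiv ℝ f ξ (a - ξ) = 0 → f ξ ≤ f a) :
    0 ≤ fderiv ℝ (fderiv ℝ f) ξ u u := by
  have hline : Tendsto (fun t : ℝ => ξ + t • u) (𝓝 0) (𝓝 ξ) :=
    (by fun_prop : Continuous fun t : ℝ => ξ + t • u).tendsto' 0 ξ (by simp)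
  have hdiff : ∀ᶠ x in 𝓝 ξ, DifferentiableAt ℝ f x :=
    (hf.eventually (by simp)).mono fun x hx => hx.differentiableAt (by simp)
  have hdiff2 : DifferentiableAt ℝ (fderiv ℝ f) ξ :=
    (hf.fderiv_right (m := 1) (by norm_num)).differentiableAt (by simp)
  refine nonneg_of_hasDerivAt_of_eventually_nhdsGT_le (φ := fun t => f (ξ + t • u))
    (φ' := fun t => fderiv ℝ f (ξ + t • u) u) (a := 0) ?_ (by simpa using hu) ?_ ?_
  · filter_upwards [hline.eventually hdiff] with t ht
    exact ht.hasFDerivAt.hasDerivAt_comp_add_smul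
  · have hξ0 : ξ + (0 : ℝ) • u = ξ := by simp
    have h := HasFDerivAt.hasDerivAt_comp_add_smul (v := u) (t := 0)
      (by rw [hξ0]; exact hdiff2.hasFDerivAt)
    exact (ContinuousLinearMap.apply ℝ ℝ u).hasFDerivAt.comp_hasDerivAt 0 h
  · filter_upwards [nhdsWithin_le_nhds (hline.eventually hmin)] with t ht
    simpa [hu] using ht

end NormedSpace

section Hessian

variable {n : ℕ} {f : Euc n → ℝ} {ξ : Euc n}

theorem hessQ_eq_fderiv_fderiv (u v : Euc n) : hessQ f ξ u v = fderiv ℝ (fderiv ℝ f) ξ u v := by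
  rw [hessQ, show gradient f = (InnerProductSpace.toDual ℝ (Euc n)).symm ∘ fderiv ℝ f from rfl,
    LinearIsometryEquiv.comp_fderiv, ContinuousLinearMap.comp_apply]
  exact InnerProductSpace.toDual_symm_apply

theorem hessQ_comm (hf : ContDiffAt ℝ 2 f ξ) (u v : Euc n) : hessQ f ξ u v = hessQ f ξ v u := by
  rw [hessQ_eq_fderiv_fderiv, hessQ_eq_fderiv_fderiv, hf.isSymmSndFDerivAt (by simp) u v]

end Hessian

section TangentBasis

variable {n : ℕ} {f : Euc n → ℝ} {η : Euc n} {i j : Fin n}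

theorem uAt_single (hj : j ≠ i) :
    uAt f i (EuclideanSpace.single j 1) η =
      EuclideanSpace.single j 1 -
        (gradient f η j / gradient f η i) • EuclideanSpace.single i 1 := by
  rw [uAt, Finset.sum_eq_single_of_mem j (Finset.mem_erase.2 ⟨hj, Finset.mem_univ j⟩)]
  · simp
  · intro k _ hk
    simp [hk]

theorem fderiv_apply_uAt_single (hi : gradient f η i ≠ 0) (hj : j ≠ i) :
    fderiv ℝ f η (uAt f i (EuclideanSpace.single j 1) η) = 0 := by
  rw [← inner_gradient_left, uAt_single hj, inner_sub_right, inner_smul_right,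
    EuclideanSpace.inner_single_right, EuclideanSpace.inner_single_right]
  simp [div_mul_cancel₀ _ hi]

theorem sq_mul_norm_uAt_single_sq (hi : gradient f η i ≠ 0) (hj : j ≠ i) :
    gradient f η i ^ 2 * ‖uAt f i (EuclideanSpace.single j 1) η‖ ^ 2 =
      gradient f η i ^ 2 + gradient f η j ^ 2 := by
  rw [uAt_single hj, ← real_inner_self_eq_norm_sq]
  simp only [inner_sub_left, inner_sub_right, inner_smul_left, inner_smul_right,
    EuclideanSpace.inner_single_left, PiLp.single_apply, hj, hj.symm, if_true, if_false,
    conj_trivial, map_one, mul_one, mul_zero, sub_zero, zero_sub]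
  field_simp
  ring

theorem sq_mul_hessQ_uAt_single (hf : ContDiffAt ℝ 2 f η) (hi : gradient f η i ≠ 0)
    (hj : j ≠ i) :
    gradient f η i ^ 2 * hessQ f η (uAt f i (EuclideanSpace.single j 1) η)
        (uAt f i (EuclideanSpace.single j 1) η) =
      hessQ f η (EuclideanSpace.single i 1) (EuclideanSpace.single i 1) * gradient f η j ^ 2 -
        2 * gradient f η i * gradient f η j *
          hessQ f η (EuclideanSpace.single i 1) (EuclideanSpace.single j 1) +
        hessQ f η (EuclideanSpace.single j 1) (EuclideanSpace.single j 1) * gradient f η i ^ 2 := by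
  have hsymm := hessQ_comm hf (EuclideanSpace.single j 1) (EuclideanSpace.single i 1)
  rw [uAt_single hj]
  simp only [hessQ] at hsymm ⊢
  simp only [map_sub, map_smul, inner_sub_left, inner_sub_right, inner_smul_left,
    inner_smul_right, conj_trivial, hsymm]
  field_simp
  ring

end TangentBasis

theorem goldmanCurv_eq_twice_directional_curvature_general
    {n : ℕ} (F : Set (Euc n)) (hF : IsCompact F) (hFc : Convex ℝ F)
    (ξ : Euc n) (hξ : ξ ∈ frontier F)
    (f : Euc n → ℝ) (δ : ℝ) (hδ : 0 < δ) (hf : ContDiffOn ℝ 2 f (Metric.ball ξ δ))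
    (hFf : F ⊆ {x | f x ≤ 0})
    (hbd : ∀ x ∈ Metric.ball ξ δ, (x ∈ frontier F ↔ f x = 0))
    (i : Fin n) (hi : gradient f ξ i ≠ 0)
    (j : Fin n) (hj : j ≠ i) :
    |hessQ f ξ (EuclideanSpace.single i 1) (EuclideanSpace.single i 1) *
        gradient f ξ j ^ 2 -
      2 * gradient f ξ i * gradient f ξ j *
        hessQ f ξ (EuclideanSpace.single i 1) (EuclideanSpace.single j 1) +
      hessQ f ξ (EuclideanSpace.single j 1) (EuclideanSpace.single j 1) *
        gradient f ξ i ^ 2| /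
      (‖gradient f ξ‖ * (gradient f ξ i ^ 2 + gradient f ξ j ^ 2)) =
    2 * (hessQ f ξ (uAt f i (EuclideanSpace.single j 1) ξ)
            (uAt f i (EuclideanSpace.single j 1) ξ) /
          (2 * ‖gradient f ξ‖ * ‖uAt f i (EuclideanSpace.single j 1) ξ‖ ^ 2)) := by
  have hfξ : f ξ = 0 := (hbd ξ (mem_ball_self hδ)).1 hξ
  have hf₂ : ContDiffAt ℝ 2 f ξ := hf.contDiffAt (ball_mem_nhds ξ hδ)
  have hdiff : DifferentiableAt ℝ f ξ := hf₂.differentiableAt (by simp)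
  have hmax : IsMaxOn f F ξ := fun x hx => by simpa [hfξ] using hFf hx
  have hzero : ∀ y ∈ ball ξ δ, f y = 0 → fderiv ℝ f ξ (y - ξ) ≤ 0 := fun y hy hfy =>
    hmax.fderiv_apply_sub_nonpos hFc (hF.isClosed.frontier_subset hξ)
      (hF.isClosed.frontier_subset ((hbd y hy).2 hfy)) hdiff
  have hnormal : 0 < fderiv ℝ f ξ (gradient f ξ) := by
    have : gradient f ξ ≠ 0 := fun h => hi (by simp [h])
    rw [← inner_gradient_left, real_inner_self_eq_norm_sq]
    positivity
  have htangent := eventually_nonneg_of_map_sub_eq_zero (ball_mem_nhds ξ hδ) hf.continuousOn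
    hdiff.hasFDerivAt hfξ hnormal hzero
  have hQ : 0 ≤ hessQ f ξ (uAt f i (EuclideanSpace.single j 1) ξ)
      (uAt f i (EuclideanSpace.single j 1) ξ) := by
    rw [hessQ_eq_fderiv_fderiv]
    exact fderiv_fderiv_apply_self_nonneg hf₂ (fderiv_apply_uAt_single hi hj)
      (by simpa [hfξ] using htangent)
  rw [← sq_mul_hessQ_uAt_single hf₂ hi hj, ← sq_mul_norm_uAt_single_sq hi hj,
    abs_of_nonneg (by positivity), mul_left_comm, mul_div_mul_left _ _ (pow_ne_zero 2 hi)]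
  ring

/-- Goldman's curvature of the intersection curve `∂F ∩ P(ξ, u^j(ξ))`, given by
`k_G(ξ) = |f_{x_ix_i}f_{x_j}² − 2f_{x_i}f_{x_j}f_{x_ix_j} + f_{x_jx_j}f_{x_i}²| /
(‖∇f(ξ)‖(f_{x_i}² + f_{x_j}²))`, equals twice the directional curvature
`κ̂_F(ξ, u^j(ξ)) = ⟨∇²f(ξ)u^j(ξ), u^j(ξ)⟩/(2‖∇f(ξ)‖‖u^j(ξ)‖²)`. -/
theorem goldmanCurv_eq_twice_directional_curvature
    {n : ℕ} (hn : 2 ≤ n) (F : Set (Euc n)) (hF : IsCompact F) (hFc : Convex ℝ F)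
    (h0 : (0 : Euc n) ∈ interior F) (ξ : Euc n) (hξ : ξ ∈ frontier F)
    (f : Euc n → ℝ) (δ : ℝ) (hδ : 0 < δ) (hf : ContDiffOn ℝ 2 f (Metric.ball ξ δ))
    (hFf : F ⊆ {x | f x ≤ 0}) (hgr : 0 < ⟪ξ, gradient f ξ⟫)
    (hbd : ∀ x ∈ Metric.ball ξ δ, (x ∈ frontier F ↔ f x = 0))
    (i : Fin n) (hi : gradient f ξ i ≠ 0) (hifirst : ∀ k < i, gradient f ξ k = 0)
    (j : Fin n) (hj : j ≠ i) :
    |hessQ f ξ (EuclideanSpace.single i 1) (EuclideanSpace.single i 1) *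
        gradient f ξ j ^ 2 -
      2 * gradient f ξ i * gradient f ξ j *
        hessQ f ξ (EuclideanSpace.single i 1) (EuclideanSpace.single j 1) +
      hessQ f ξ (EuclideanSpace.single j 1) (EuclideanSpace.single j 1) *
        gradient f ξ i ^ 2| /
      (‖gradient f ξ‖ * (gradient f ξ i ^ 2 + gradient f ξ j ^ 2)) =
    2 * (hessQ f ξ (uAt f i (EuclideanSpace.single j 1) ξ)
            (uAt f i (EuclideanSpace.single j 1) ξ) /
          (2 * ‖gradient f ξ‖ * ‖uAt f i (EuclideanSpace.single j 1) ξ‖ ^ 2)) :=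
  goldmanCurv_eq_twice_directional_curvature_general F hF hFc ξ hξ f δ hδ hf hFf hbd i hi j hj
end
end
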